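/- arXiv:1401.7725 — 2 statements merged into one kernel-verified Lean document; each statement's English description precedes it below -/
import Mathlib

section
/- Let g be a Lie triple system over a field F with char F ≠ 2, 3 and N : g → g a Nijenhuis operator. Then for all integers j, k > 0 and all x1,x2,x3 ∈ g one has N^j([x1,x2,x3]_{N^k}) + N^k([x1,x2,x3]_{N^j}) = [N^k x1,N^j x2,x3] + [N^k x1,x2,N^j x3] + [x1,N^k x2,N^j x3] + [N^j x1,N^k x2,x3] + [N^j x1,x2,N^k x3] + [x1,N^j x2,N^k x3]. -/
/-- `N` is a Nijenhuis operator for the Lie triple system bracket `t`. -/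
def IsNijenhuis {F : Type*} [Field F] {g : Type*} [AddCommGroup g] [Module F g]
    (t : g →ₗ[F] g →ₗ[F] g →ₗ[F] g) (N : Module.End F g) : Prop :=
  (∀ x y z : g, t (N x) (N y) (N z) = 0) ∧
  (∀ x y z : g,
    N (N (t x y z)) =
      N (t (N x) y z) + N (t x (N y) z) + N (t x y (N z)) -
        t (N x) (N y) z - t (N x) y (N z) - t x (N y) (N z))

/-- The deformed bracket `[x,y,z]_M = [Mx,y,z]+[x,My,z]+[x,y,Mz]−M[x,y,z]`. -/
def deform {g : Type*} [AddCommGroup g] (b : g → g → g → g) (M : g → g) :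
    g → g → g → g :=
  fun x y z => b (M x) y z + b x (M y) z + b x y (M z) - M (b x y z)

/-!
Ternary maps `g → g → g → g` carry four commuting operators: composing with `N` on the outside
(`u`) and applying `N` to one of the three arguments (`a`, `b`, `c`). Over the commutative algebra
they generate, `B ↦ [·,·,·]_{N^n}` for the bracket `B` is multiplication by
`a^n + b^n + c^n - u^n`. The Nijenhuis conditions say that the bracket is annihilated by `abc` and
by `u² - (a+b+c)u + (ab+bc+ca)`; modulo these, Newton's identities give
`a^n + b^n + c^n - u^n = (a+b+c-u)^n` for `n ≥ 1`. Hence `[·,·,·]_{N^(j+k)}` is the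
`N^j`-deformation of `[·,·,·]_{N^k}`, and expanding both sides gives the identity.
-/

def deformSymbol {R : Type*} [CommRing R] (u a b c : R) (n : ℕ) : R :=
  a ^ n + b ^ n + c ^ n - u ^ n

theorem deformSymbol_eq_pow {R : Type*} [CommRing R] {u a b c : R} (habc : a * b * c = 0)
    (hu : u ^ 2 - (a + b + c) * u + (a * b + b * c + c * a) = 0) {n : ℕ} (hn : n ≠ 0) :
    deformSymbol u a b c n = (a + b + c - u) ^ n := by
  obtain ⟨n, rfl⟩ := Nat.exists_eq_succ_of_ne_zero hn
  suffices h : ∀ n, deformSymbol u a b c (n + 1) = (a + b + c - u) ^ (n + 1) ∧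
      deformSymbol u a b c (n + 2) = (a + b + c - u) ^ (n + 2) from (h n).1
  intro n
  induction n with
  | zero =>
    unfold deformSymbol
    exact ⟨by ring, by linear_combination (-2) * hu⟩
  | succ n ih =>
    refine ⟨ih.2, ?_⟩
    unfold deformSymbol at ih ⊢
    -- For `n ≥ 1` both sides satisfy `s (n + 2) = e₁ s (n + 1) - e₂ s n`: on the left by Newton's
    -- identity with `e₃ = abc = 0` and by `hu`, on the right because `(a+b+c-u)² - e₁(a+b+c-u) + e₂`
    -- is again the left side of `hu`.
    linear_combination (a + b + c) * ih.2 - (a * b + b * c + c * a) * ih.1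
      + (a ^ n + b ^ n + c ^ n) * habc - (u ^ (n + 1) + (a + b + c - u) ^ (n + 1)) * hu

theorem deformSymbol_add {R : Type*} [CommRing R] {u a b c : R} (habc : a * b * c = 0)
    (hu : u ^ 2 - (a + b + c) * u + (a * b + b * c + c * a) = 0) {j k : ℕ} (hj : j ≠ 0)
    (hk : k ≠ 0) :
    deformSymbol u a b c (j + k) = deformSymbol u a b c j * deformSymbol u a b c k := by
  rw [deformSymbol_eq_pow habc hu hj, deformSymbol_eq_pow habc hu hk,
    deformSymbol_eq_pow habc hu (by omega), pow_add]

theorem deformSymbol_add_smul {R M : Type*} [CommRing R] [AddCommGroup M] [Module R M]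
    {u a b c : R} {t : M} (habc : (a * b * c) • t = 0)
    (hu : (u ^ 2 - (a + b + c) * u + (a * b + b * c + c * a)) • t = 0) {j k : ℕ} (hj : j ≠ 0)
    (hk : k ≠ 0) :
    deformSymbol u a b c (j + k) • t = (deformSymbol u a b c j * deformSymbol u a b c k) • t := by
  let π := Ideal.Quotient.mk (Ideal.torsionOf R M t)
  have hπ (r : R) : π r = 0 ↔ r • t = 0 :=
    Ideal.Quotient.eq_zero_iff_mem.trans (Ideal.mem_torsionOf_iff t r)
  have hmap (n : ℕ) : π (deformSymbol u a b c n) = deformSymbol (π u) (π a) (π b) (π c) n := by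
    simp only [deformSymbol, map_sub, map_add, map_pow]
  rw [← sub_eq_zero, ← sub_smul, ← hπ, map_sub, map_mul, hmap, hmap, hmap, sub_eq_zero]
  refine deformSymbol_add ?_ ?_ hj hk
  · simpa using (hπ _).2 habc
  · simpa using (hπ _).2 hu

namespace TernaryMap

section CommSemiring

variable {R M : Type*} [CommSemiring R] [AddCommMonoid M] [Module R M]

@[simps]
def postcomp (N : Module.End R M) : Module.End R (M → M → M → M) where
  toFun B x y z := N (B x y z)
  map_add' _ _ := by ext; simp
  map_smul' _ _ := by ext; simp

@[simps]
def precomp₁ (N : Module.End R M) : Module.End R (M → M → M → M) where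
  toFun B x y z := B (N x) y z
  map_add' _ _ := rfl
  map_smul' _ _ := rfl

@[simps]
def precomp₂ (N : Module.End R M) : Module.End R (M → M → M → M) where
  toFun B x y z := B x (N y) z
  map_add' _ _ := rfl
  map_smul' _ _ := rfl

@[simps]
def precomp₃ (N : Module.End R M) : Module.End R (M → M → M → M) where
  toFun B x y z := B x y (N z)
  map_add' _ _ := rfl
  map_smul' _ _ := rfl

variable (N : Module.End R M)

@[simp]
theorem postcomp_pow_apply (n : ℕ) (B : M → M → M → M) (x y z : M) :
    (postcomp N ^ n) B x y z = (N ^ n) (B x y z) := by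
  induction n generalizing B with
  | zero => rfl
  | succ n ih => simp [pow_succ', ih]

@[simp]
theorem precomp₁_pow_apply (n : ℕ) (B : M → M → M → M) (x y z : M) :
    (precomp₁ N ^ n) B x y z = B ((N ^ n) x) y z := by
  induction n generalizing B with
  | zero => rfl
  | succ n ih => rw [pow_succ, Module.End.mul_apply, ih, pow_succ', Module.End.mul_apply]; rfl

@[simp]
theorem precomp₂_pow_apply (n : ℕ) (B : M → M → M → M) (x y z : M) :
    (precomp₂ N ^ n) B x y z = B x ((N ^ n) y) z := by
  induction n generalizing B with
  | zero => rfl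
  | succ n ih => rw [pow_succ, Module.End.mul_apply, ih, pow_succ', Module.End.mul_apply]; rfl

@[simp]
theorem precomp₃_pow_apply (n : ℕ) (B : M → M → M → M) (x y z : M) :
    (precomp₃ N ^ n) B x y z = B x y ((N ^ n) z) := by
  induction n generalizing B with
  | zero => rfl
  | succ n ih => rw [pow_succ, Module.End.mul_apply, ih, pow_succ', Module.End.mul_apply]; rfl

def compOps : Set (Module.End R (M → M → M → M)) :=
  {postcomp N, precomp₁ N, precomp₂ N, precomp₃ N}

theorem compOps_commute : ∀ A ∈ compOps N, ∀ B ∈ compOps N, A * B = B * A := by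
  simp only [compOps, Set.mem_insert_iff, Set.mem_singleton_iff]
  rintro A (rfl | rfl | rfl | rfl) B (rfl | rfl | rfl | rfl) <;> rfl

abbrev compAlgebra : Subalgebra R (Module.End R (M → M → M → M)) :=
  Algebra.adjoin R (compOps N)

instance : IsMulCommutative (compAlgebra N) :=
  Algebra.isMulCommutative_adjoin R (compOps_commute N)

def postcompAlg : compAlgebra N := ⟨postcomp N, Algebra.subset_adjoin (by simp [compOps])⟩
def precompAlg₁ : compAlgebra N := ⟨precomp₁ N, Algebra.subset_adjoin (by simp [compOps])⟩
def precompAlg₂ : compAlgebra N := ⟨precomp₂ N, Algebra.subset_adjoin (by simp [compOps])⟩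
def precompAlg₃ : compAlgebra N := ⟨precomp₃ N, Algebra.subset_adjoin (by simp [compOps])⟩

@[simp] theorem coe_postcompAlg : (postcompAlg N : Module.End R (M → M → M → M)) = postcomp N :=
  rfl

@[simp] theorem coe_precompAlg₁ : (precompAlg₁ N : Module.End R (M → M → M → M)) = precomp₁ N :=
  rfl

@[simp] theorem coe_precompAlg₂ : (precompAlg₂ N : Module.End R (M → M → M → M)) = precomp₂ N :=
  rfl

@[simp] theorem coe_precompAlg₃ : (precompAlg₃ N : Module.End R (M → M → M → M)) = precomp₃ N :=
  rfl

end CommSemiring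

open scoped IsMulCommutative in
theorem deformSymbol_smul {R M : Type*} [CommRing R] [AddCommGroup M] [Module R M]
    (N : Module.End R M) (n : ℕ) (B : M → M → M → M) :
    deformSymbol (postcompAlg N) (precompAlg₁ N) (precompAlg₂ N) (precompAlg₃ N) n • B =
      deform B ⇑(N ^ n) := by
  rw [Subalgebra.smul_def]
  funext x y z
  simp [deformSymbol, deform]

end TernaryMap

open TernaryMap IsMulCommutative in
theorem IsNijenhuis.deform_pow_add {F g : Type*} [Field F] [AddCommGroup g] [Module F g]
    {t : g →ₗ[F] g →ₗ[F] g →ₗ[F] g} {N : Module.End F g} (hN : IsNijenhuis t N) {j k : ℕ}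
    (hj : j ≠ 0) (hk : k ≠ 0) :
    deform (fun x y z => t x y z) ⇑(N ^ (j + k)) =
      deform (deform (fun x y z => t x y z) ⇑(N ^ k)) ⇑(N ^ j) := by
  have key := deformSymbol_add_smul (t := fun x y z => t x y z) (u := postcompAlg N)
    (a := precompAlg₁ N) (b := precompAlg₂ N) (c := precompAlg₃ N) ?_ ?_ hj hk
  · rwa [mul_smul, deformSymbol_smul, deformSymbol_smul, deformSymbol_smul] at key
  · rw [Subalgebra.smul_def]
    funext x y z
    simp [hN.1]
  · rw [Subalgebra.smul_def]
    funext x y z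
    simp only [pow_two, AddMemClass.coe_add, AddSubgroupClass.coe_sub, MulMemClass.coe_mul,
      coe_postcompAlg, coe_precompAlg₁, coe_precompAlg₂, coe_precompAlg₃, Module.End.smul_def,
      LinearMap.add_apply, LinearMap.sub_apply, Module.End.mul_apply, Pi.add_apply, Pi.sub_apply,
      postcomp_apply, precomp₁_apply, precomp₂_apply, precomp₃_apply, Pi.zero_apply, hN.2]
    abel

theorem nijenhuis_pow_mixed_identity_general {F : Type*} [Field F]
    {g : Type*} [AddCommGroup g] [Module F g]
    (t : g →ₗ[F] g →ₗ[F] g →ₗ[F] g)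
    (N : Module.End F g) (hN : IsNijenhuis t N) :
    ∀ j k : ℕ, 0 < j → 0 < k → ∀ x1 x2 x3 : g,
      (N ^ j) (deform (fun x y z => t x y z) (⇑(N ^ k)) x1 x2 x3) +
        (N ^ k) (deform (fun x y z => t x y z) (⇑(N ^ j)) x1 x2 x3) =
        t ((N ^ k) x1) ((N ^ j) x2) x3 + t ((N ^ k) x1) x2 ((N ^ j) x3) +
          t x1 ((N ^ k) x2) ((N ^ j) x3) + t ((N ^ j) x1) ((N ^ k) x2) x3 +
          t ((N ^ j) x1) x2 ((N ^ k) x3) + t x1 ((N ^ j) x2) ((N ^ k) x3) := by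
  intro j k hj hk x1 x2 x3
  have key := congrFun₃ (hN.deform_pow_add hj.ne' hk.ne') x1 x2 x3
  have hjk (w : g) : (N ^ j) ((N ^ k) w) = (N ^ (j + k)) w := by
    rw [← Module.End.mul_apply, ← pow_add]
  have hkj (w : g) : (N ^ k) ((N ^ j) w) = (N ^ (j + k)) w := by
    rw [← Module.End.mul_apply, ← pow_add, add_comm]
  simp only [deform, map_add, map_sub, hjk, hkj] at key ⊢
  linear_combination (norm := abel) key

theorem nijenhuis_pow_mixed_identity {F : Type*} [Field F]
    (hchar2 : (2 : F) ≠ 0) (hchar3 : (3 : F) ≠ 0)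
    {g : Type*} [AddCommGroup g] [Module F g]
    (t : g →ₗ[F] g →ₗ[F] g →ₗ[F] g)
    (hskew : ∀ x y : g, t x x y = 0)
    (hjac : ∀ x y z : g, t x y z + t y z x + t z x y = 0)
    (hfund : ∀ x y a b c : g,
      t x y (t a b c) = t (t x y a) b c + t a (t x y b) c + t a b (t x y c))
    (N : Module.End F g) (hN : IsNijenhuis t N) :
    ∀ j k : ℕ, 0 < j → 0 < k → ∀ x1 x2 x3 : g,
      (N ^ j) (deform (fun x y z => t x y z) (⇑(N ^ k)) x1 x2 x3) +
        (N ^ k) (deform (fun x y z => t x y z) (⇑(N ^ j)) x1 x2 x3) =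
        t ((N ^ k) x1) ((N ^ j) x2) x3 + t ((N ^ k) x1) x2 ((N ^ j) x3) +
          t x1 ((N ^ k) x2) ((N ^ j) x3) + t ((N ^ j) x1) ((N ^ k) x2) x3 +
          t ((N ^ j) x1) x2 ((N ^ k) x3) + t x1 ((N ^ j) x2) ((N ^ k) x3) :=
  nijenhuis_pow_mixed_identity_general t N hN
end

section
/- Let g be a Lie triple system over a field F with char F ≠ 2, 3 and N : g → g a Nijenhuis operator. Then for every polynomial P(X) = c1·X + c2·X² + ... + cn·X^n with coefficients ci ∈ F and zero constant term, the operator P(N) = c1·N + c2·N² + ... + cn·N^n is a Nijenhuis operator. -/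
/-!
Let `X, Y, Z, O` be `N` acting on the three arguments and on the value of trilinear maps. These
operators commute, and the two Nijenhuis identities say exactly that `XYZ` and
`O² - (X + Y + Z) O + (XY + XZ + YZ)` annihilate `t`. Modulo the annihilator of `t`, the triple
`X, Y, Z` therefore has the same elementary symmetric functions as `O, D, 0` with
`D = X + Y + Z - O`, hence the same power sums, so `p X + p Y + p Z = p O + p D` whenever
`p 0 = 0`. Applied to `p` and `p²` this gives (after dividing by `2`) the second Nijenhuis
identity for `p N`; the first one follows from `p = X q`.
-/

open Polynomial

section PowerSums

variable {R : Type*} [CommRing R] {x y z a b c : R}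

theorem pow_add_pow_add_pow_eq_of_esymm (h₁ : x + y + z = a + b + c)
    (h₂ : x * y + x * z + y * z = a * b + a * c + b * c) (h₃ : x * y * z = a * b * c) (k : ℕ) :
    x ^ k + y ^ k + z ^ k = a ^ k + b ^ k + c ^ k := by
  have newton (u v w : R) (k : ℕ) : u ^ (k + 3) + v ^ (k + 3) + w ^ (k + 3) =
      (u + v + w) * (u ^ (k + 2) + v ^ (k + 2) + w ^ (k + 2))
      - (u * v + u * w + v * w) * (u ^ (k + 1) + v ^ (k + 1) + w ^ (k + 1))
      + u * v * w * (u ^ k + v ^ k + w ^ k) := by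
    ring
  suffices ∀ k, x ^ k + y ^ k + z ^ k = a ^ k + b ^ k + c ^ k ∧
      x ^ (k + 1) + y ^ (k + 1) + z ^ (k + 1) = a ^ (k + 1) + b ^ (k + 1) + c ^ (k + 1) ∧
      x ^ (k + 2) + y ^ (k + 2) + z ^ (k + 2) = a ^ (k + 2) + b ^ (k + 2) + c ^ (k + 2) from
    (this k).1
  intro k
  induction k with
  | zero =>
    refine ⟨by ring, by simpa using h₁, ?_⟩
    linear_combination (x + y + z + a + b + c) * h₁ - 2 * h₂
  | succ k ih =>
    obtain ⟨ih₀, ih₁, ih₂⟩ := ih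
    refine ⟨ih₁, ih₂, ?_⟩
    rw [newton x y z, newton a b c, h₁, h₂, h₃, ih₀, ih₁, ih₂]

variable {F : Type*} [CommSemiring F] [Algebra F R]

theorem aeval_add_aeval_add_aeval_eq_of_esymm (h₁ : x + y + z = a + b + c)
    (h₂ : x * y + x * z + y * z = a * b + a * c + b * c) (h₃ : x * y * z = a * b * c)
    (p : F[X]) : aeval x p + aeval y p + aeval z p = aeval a p + aeval b p + aeval c p := by
  simp only [aeval_eq_sum_range, ← Finset.sum_add_distrib, ← smul_add,
    pow_add_pow_add_pow_eq_of_esymm h₁ h₂ h₃]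

end PowerSums

section NijenhuisRelations

variable {F R : Type*} [CommSemiring F] [CommRing R] [Algebra F R] {x y z o : R} {p : F[X]}

theorem aeval_mul_aeval_mul_aeval_eq_zero (hxyz : x * y * z = 0) (hp : p.coeff 0 = 0) :
    aeval x p * aeval y p * aeval z p = 0 := by
  have aeval_eq_mul (u : R) : aeval u p = u * aeval u p.divX := by
    conv_lhs => rw [← X_mul_divX_add p]
    simp [hp]
  rw [aeval_eq_mul x, aeval_eq_mul y, aeval_eq_mul z]
  linear_combination (aeval x p.divX * aeval y p.divX * aeval z p.divX) * hxyz

theorem aeval_sq_sub_add_eq_zero (h2 : IsUnit (2 : R)) (hxyz : x * y * z = 0)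
    (ho : o ^ 2 - (x + y + z) * o + (x * y + x * z + y * z) = 0) (hp : p.coeff 0 = 0) :
    aeval o p ^ 2 - (aeval x p + aeval y p + aeval z p) * aeval o p +
      (aeval x p * aeval y p + aeval x p * aeval z p + aeval y p * aeval z p) = 0 := by
  set d := x + y + z - o
  have h₁ : x + y + z = o + d + 0 := by ring
  have h₂ : x * y + x * z + y * z = o * d + o * 0 + d * 0 := by linear_combination ho
  have h₃ : x * y * z = o * d * 0 := by rw [hxyz, mul_zero]
  have sum_eq := aeval_add_aeval_add_aeval_eq_of_esymm h₁ h₂ h₃ p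
  have sq_sum_eq := aeval_add_aeval_add_aeval_eq_of_esymm h₁ h₂ h₃ (p ^ 2)
  simp only [map_pow, ← coeff_zero_eq_aeval_zero', hp, map_zero, add_zero] at sum_eq sq_sum_eq
  refine h2.mul_right_eq_zero.1 ?_
  linear_combination (aeval x p + aeval y p + aeval z p - aeval o p + aeval d p) * sum_eq - sq_sum_eq

def NijenhuisRelations (I : Ideal R) (x y z o : R) : Prop :=
  x * y * z ∈ I ∧ o ^ 2 - (x + y + z) * o + (x * y + x * z + y * z) ∈ I

theorem NijenhuisRelations.aeval {I : Ideal R} (h2 : IsUnit (2 : F))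
    (h : NijenhuisRelations I x y z o) (hp : p.coeff 0 = 0) :
    NijenhuisRelations I (aeval x p) (aeval y p) (aeval z p) (aeval o p) := by
  simp only [NijenhuisRelations, ← Ideal.Quotient.eq_zero_iff_mem, ← Ideal.Quotient.mkₐ_eq_mk F,
    map_mul, map_add, map_sub, map_pow, ← aeval_algHom_apply] at h ⊢
  have h2' : IsUnit (2 : R ⧸ I) := by
    rw [← map_ofNat (algebraMap F (R ⧸ I)) 2]
    exact h2.map _
  exact ⟨aeval_mul_aeval_mul_aeval_eq_zero h.1 hp, aeval_sq_sub_add_eq_zero h2' h.1 h.2 hp⟩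

end NijenhuisRelations

section TrilinearAct

variable {F g : Type*} [CommRing F] [AddCommGroup g] [Module F g]

-- Without this shortcut, instance search fails on `Ring (Module.End F (g →ₗ[F] g →ₗ[F] g →ₗ[F] g))`.
instance : AddCommGroup (g →ₗ[F] g →ₗ[F] g →ₗ[F] g) := LinearMap.addCommGroup

def trilinearAct (A B C D : Module.End F g) : Module.End F (g →ₗ[F] g →ₗ[F] g →ₗ[F] g) where
  toFun T := (T.compl₁₂ A B).compr₂ (LinearMap.llcomp F g g g D ∘ₗ LinearMap.lcomp F g C)
  map_add' _ _ := by ext; simp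
  map_smul' _ _ := by ext; simp

variable {A B C D A' B' C' D' : Module.End F g}

@[simp]
theorem trilinearAct_apply (T : g →ₗ[F] g →ₗ[F] g →ₗ[F] g) (x y z : g) :
    trilinearAct A B C D T x y z = D (T (A x) (B y) (C z)) := rfl

theorem trilinearAct_mul :
    trilinearAct A B C D * trilinearAct A' B' C' D' =
      trilinearAct (A' * A) (B' * B) (C' * C) (D * D') := rfl

theorem trilinearAct_pow (n : ℕ) :
    trilinearAct A B C D ^ n = trilinearAct (A ^ n) (B ^ n) (C ^ n) (D ^ n) := by
  induction n with
  | zero => rfl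
  | succ n ih =>
    rw [pow_succ, ih, trilinearAct_mul, pow_succ' A, pow_succ' B, pow_succ' C, pow_succ D]

/-- `slotOp N i` applies `N` to the `i`-th argument for `i < 3`, and to the value for `i = 3`. -/
def slotOp (N : Module.End F g) : Fin 4 → Module.End F (g →ₗ[F] g →ₗ[F] g →ₗ[F] g) :=
  ![trilinearAct N 1 1 1, trilinearAct 1 N 1 1, trilinearAct 1 1 N 1, trilinearAct 1 1 1 N]

theorem slotOp_commute (N : Module.End F g) (i j : Fin 4) :
    slotOp N i * slotOp N j = slotOp N j * slotOp N i := by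
  fin_cases i <;> fin_cases j <;> simp [slotOp, trilinearAct_mul]

theorem aeval_slotOp (N : Module.End F g) (p : F[X]) (i : Fin 4) :
    aeval (slotOp N i) p = slotOp (aeval N p) i := by
  fin_cases i <;> ext <;> simp [slotOp, aeval_eq_sum_range, trilinearAct_pow, LinearMap.sum_apply]

variable (N : Module.End F g)

abbrev slotAlgebra : Subalgebra F (Module.End F (g →ₗ[F] g →ₗ[F] g →ₗ[F] g)) :=
  Algebra.adjoin F (Set.range (slotOp N))

open scoped IsMulCommutative in
instance : CommRing (slotAlgebra N) :=
  have := Algebra.isMulCommutative_adjoin F (s := Set.range (slotOp N)) <| by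
    rintro _ ⟨i, rfl⟩ _ ⟨j, rfl⟩
    exact slotOp_commute N i j
  inferInstance

def slotAlgebra.gen (i : Fin 4) : slotAlgebra N :=
  ⟨slotOp N i, Algebra.subset_adjoin (Set.mem_range_self i)⟩

end TrilinearAct

theorem isNijenhuis_iff_nijenhuisRelations {F g : Type*} [Field F] [AddCommGroup g] [Module F g]
    {N : Module.End F g} (t : g →ₗ[F] g →ₗ[F] g →ₗ[F] g) {A : Module.End F g}
    {a : Fin 4 → slotAlgebra N} (ha : ∀ i, (a i : Module.End F _) = slotOp A i) :
    IsNijenhuis t A ↔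
      NijenhuisRelations (Ideal.torsionOf (slotAlgebra N) _ t) (a 0) (a 1) (a 2) (a 3) := by
  simp only [NijenhuisRelations, Ideal.mem_torsionOf_iff, Subalgebra.smul_def, Module.End.smul_def]
  push_cast
  simp only [ha, IsNijenhuis, LinearMap.ext_iff, slotOp, Fin.isValue, Matrix.cons_val_zero,
    Matrix.cons_val_one, Matrix.cons_val, trilinearAct_mul, one_mul, mul_one, trilinearAct_apply,
    Module.End.one_apply, LinearMap.zero_apply, pow_two, LinearMap.add_apply, LinearMap.sub_apply,
    Module.End.mul_apply]
  refine and_congr Iff.rfl (forall₃_congr fun x y z => ?_)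
  constructor <;> intro h <;> linear_combination (norm := module) h

theorem nijenhuis_polynomial_general {F : Type*} [Field F]
    (hchar2 : (2 : F) ≠ 0)
    {g : Type*} [AddCommGroup g] [Module F g]
    (t : g →ₗ[F] g →ₗ[F] g →ₗ[F] g)
    (N : Module.End F g) (hN : IsNijenhuis t N) :
    ∀ P : Polynomial F, P.coeff 0 = 0 → IsNijenhuis t (Polynomial.aeval N P) := by
  intro P hP
  have hrel :=
    (isNijenhuis_iff_nijenhuisRelations t (a := slotAlgebra.gen N) fun _ => rfl).1 hN
  refine (isNijenhuis_iff_nijenhuisRelations t (a := fun i => aeval (slotAlgebra.gen N i) P)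
    fun i => ?_).2 (hrel.aeval hchar2.isUnit hP)
  rw [aeval_subalgebra_coe]
  exact aeval_slotOp N P i

theorem nijenhuis_polynomial {F : Type*} [Field F]
    (hchar2 : (2 : F) ≠ 0) (hchar3 : (3 : F) ≠ 0)
    {g : Type*} [AddCommGroup g] [Module F g]
    (t : g →ₗ[F] g →ₗ[F] g →ₗ[F] g)
    (hskew : ∀ x y : g, t x x y = 0)
    (hjac : ∀ x y z : g, t x y z + t y z x + t z x y = 0)
    (hfund : ∀ x y a b c : g,
      t x y (t a b c) = t (t x y a) b c + t a (t x y b) c + t a b (t x y c))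
    (N : Module.End F g) (hN : IsNijenhuis t N) :
    ∀ P : Polynomial F, P.coeff 0 = 0 → IsNijenhuis t (Polynomial.aeval N P) :=
  nijenhuis_polynomial_general hchar2 t N hN
end
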